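/- For every integer n ≥ 1 and every integer q ≥ 1, limsup_{m→∞} h_{n,m}(2^{q+2})/m ≤ (2/7)^q · (1/20). -/

import Mathlib

open Polynomial Filter

/-- The on-site energy polynomial `ε_n(α) = (−1)^n − Σ_{k=2}^{n+1} (−1)^{⌊n/k⌋} α^{k−1}` in `ℤ[α]`. -/
noncomputable def eps (n : ℕ) : Polynomial ℤ :=
  C ((-1 : ℤ) ^ n) - ∑ k ∈ Finset.Icc 2 (n + 1), C ((-1 : ℤ) ^ (n / k)) * X ^ (k - 1)

/-- `Q_n(m) = ∏_{s=1}^m (ε_{n+s}(α) − ε_n(α))`. -/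
noncomputable def Q (n m : ℕ) : Polynomial ℤ :=
  ∏ s ∈ Finset.Icc 1 m, (eps (n + s) - eps n)

/-- `lowdeg P`: the multiplicity of the root `α = 0`, i.e. the least `i` with nonzero
coefficient of `α^i`. -/
noncomputable def lowdeg (P : Polynomial ℤ) : ℕ := P.natTrailingDegree

/-- `h_{n,m}(i)`: the number of `s` with `1 ≤ s ≤ m` such that
`lowdeg (ε_{n+s} − ε_n) > i`. -/
noncomputable def hcount (n m i : ℕ) : ℕ :=
  ((Finset.Icc 1 m).filter (fun s => i < lowdeg (eps (n + s) - eps n))).card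

/-! ### Auxiliary lemmas -/

lemma neg_one_pow_parity {a b : ℕ} (h : ((-1 : ℤ)) ^ a = (-1) ^ b) : a % 2 = b % 2 := by
  rcases Nat.even_or_odd a with ha | ha <;> rcases Nat.even_or_odd b with hb | hb
  · rw [Nat.even_iff] at ha hb; omega
  · rw [ha.neg_one_pow, hb.neg_one_pow] at h; norm_num at h
  · rw [ha.neg_one_pow, hb.neg_one_pow] at h; norm_num at h
  · rw [Nat.odd_iff] at ha hb; omega

lemma eps_coeff (n j : ℕ) :
    (eps n).coeff j = (if j = 0 then ((-1:ℤ)) ^ n else 0)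
      - (if 1 ≤ j ∧ j ≤ n then ((-1:ℤ)) ^ (n / (j + 1)) else 0) := by
  unfold eps
  rw [Polynomial.coeff_sub, Polynomial.coeff_C, Polynomial.finset_sum_coeff]
  congr 1
  simp only [Polynomial.coeff_C_mul, Polynomial.coeff_X_pow]
  by_cases hj : 1 ≤ j ∧ j ≤ n
  · rw [Finset.sum_eq_single_of_mem (j + 1)
        (by simp only [Finset.mem_Icc]; omega)]
    · simp [hj]
    · intro b hb hne
      simp only [Finset.mem_Icc] at hb
      have : ¬ (j = b - 1) := by omega
      simp [this]
  · rw [Finset.sum_eq_zero, if_neg hj]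
    intro b hb
    simp only [Finset.mem_Icc] at hb
    have : ¬ (j = b - 1) := by omega
    simp [this]

lemma parity_of_lowdeg {n s i : ℕ} (hs : 1 ≤ s) (hni : i ≤ n)
    (hlow : i < lowdeg (eps (n + s) - eps n)) :
    ∀ k, 1 ≤ k → k ≤ i + 1 → (n + s) / k % 2 = n / k % 2 := by
  intro k hk1 hki
  have hco : (eps (n + s) - eps n).coeff (k - 1) = 0 :=
    Polynomial.coeff_eq_zero_of_lt_natTrailingDegree (lt_of_le_of_lt (by omega) hlow)
  rw [Polynomial.coeff_sub, eps_coeff, eps_coeff] at hco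
  rcases Nat.eq_or_lt_of_le hk1 with h1 | h2
  · -- k = 1
    have hk0 : k - 1 = 0 := by omega
    have h' : ¬ (1 ≤ 0 ∧ (0:ℕ) ≤ n + s) := by omega
    have h'' : ¬ (1 ≤ 0 ∧ (0:ℕ) ≤ n) := by omega
    simp only [hk0, if_pos rfl, if_neg h', if_neg h'', sub_zero, if_true] at hco
    have hpow : ((-1:ℤ)) ^ (n + s) = (-1) ^ n := by linarith
    have := neg_one_pow_parity hpow
    have hk' : k = 1 := by omega
    simpa [hk'] using this
  · -- k ≥ 2
    have hj0 : ¬ (k - 1 = 0) := by omega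
    have hjn : 1 ≤ k - 1 ∧ k - 1 ≤ n + s := by omega
    have hjn' : 1 ≤ k - 1 ∧ k - 1 ≤ n := by omega
    have hkk : k - 1 + 1 = k := by omega
    simp only [if_neg hj0, if_pos hjn, if_pos hjn', hkk, zero_sub] at hco
    have hpow : ((-1:ℤ)) ^ ((n + s) / k) = (-1) ^ (n / k) := by linarith
    exact neg_one_pow_parity hpow

lemma coeff_top_ne (n s i : ℕ) (hs : 1 ≤ s) (hni : n < i) :
    ¬ (i < lowdeg (eps (n + s) - eps n)) := by
  intro hlow
  have hco : (eps (n + s) - eps n).coeff (n + 1) = 0 :=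
    Polynomial.coeff_eq_zero_of_lt_natTrailingDegree (lt_of_le_of_lt (by omega) hlow)
  rw [Polynomial.coeff_sub, eps_coeff, eps_coeff] at hco
  have h0 : ¬ (n + 1 = 0) := by omega
  have h1 : 1 ≤ n + 1 ∧ n + 1 ≤ n + s := by omega
  have h2 : ¬ (1 ≤ n + 1 ∧ n + 1 ≤ n) := by omega
  simp only [if_neg h0, if_pos h1, if_neg h2, zero_sub, sub_zero, sub_self,
    neg_eq_zero] at hco
  have : ((-1:ℤ)) ^ ((n + s) / (n + 1 + 1)) ≠ 0 := by
    apply pow_ne_zero; norm_num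
  exact this hco

lemma chain_pow {x y k L : ℕ}
    (h : ∀ j, j < L → x / (k * 2 ^ j) % 2 = y / (k * 2 ^ j) % 2) :
    x / k % 2 ^ L = y / k % 2 ^ L := by
  apply Nat.eq_of_testBit_eq
  intro i
  rw [Nat.testBit_mod_two_pow, Nat.testBit_mod_two_pow]
  by_cases hi : i < L
  · have hd : (decide (i < L)) = true := by simp [hi]
    rw [hd, Bool.true_and, Bool.true_and, Nat.testBit_eq_decide_div_mod_eq, Nat.testBit_eq_decide_div_mod_eq,
      Nat.div_div_eq_div_mul, Nat.div_div_eq_div_mul, h i hi]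
  · simp [hi]

lemma dvd_of_mod_pow_eq {n s M : ℕ} (h : (n + s) % M = n % M) : M ∣ s := by
  have h2 : n + s ≡ n + 0 [MOD M] := by
    simpa [Nat.ModEq] using h
  have := (Nat.ModEq.add_left_cancel' n h2)
  exact (Nat.modEq_zero_iff_dvd).mp this

lemma rigid_mod {n s k L : ℕ} (hk : 0 < k) (hdvd : 2 ^ L ∣ s)
    (hch : (n + s) / k % 2 ^ L = n / k % 2 ^ L) :
    (n + s) % k % 2 ^ L = n % k % 2 ^ L := by
  have hDle : n / k ≤ (n + s) / k := Nat.div_le_div_right (Nat.le_add_right n s)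
  have hDdvd : (2 ^ L : ℕ) ∣ (n + s) / k - n / k :=
    (Nat.modEq_iff_dvd' hDle).mp hch.symm
  have key : ((2 ^ L : ℕ) : ℤ) ∣ ((n + s) % k : ℤ) - (n % k : ℤ) := by
    have e1 : ((n:ℤ) + s) = k * ((n + s : ℕ) / k : ℕ) + ((n + s : ℕ) % k : ℕ) := by
      exact_mod_cast (Nat.div_add_mod (n + s) k).symm
    have e2 : (n:ℤ) = k * ((n / k : ℕ) : ℤ) + ((n % k : ℕ) : ℤ) := by
      exact_mod_cast (Nat.div_add_mod n k).symm
    have hsd : ((2 ^ L : ℕ) : ℤ) ∣ (s : ℤ) := Int.natCast_dvd_natCast.mpr hdvd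
    have hDd : ((2 ^ L : ℕ) : ℤ) ∣ (((n + s) / k : ℕ) : ℤ) - ((n / k : ℕ) : ℤ) := by
      have := Int.natCast_dvd_natCast.mpr hDdvd
      rwa [Nat.cast_sub hDle] at this
    have e3 : ((n + s) % k : ℤ) - (n % k : ℤ)
        = (s : ℤ) - (k : ℤ) * ((((n + s) / k : ℕ) : ℤ) - ((n / k : ℕ) : ℤ)) := by
      push_cast at e1 e2 ⊢
      linarith
    rw [e3]
    exact dvd_sub hsd (Dvd.dvd.mul_left hDd k)
  have hmod : (n + s) % k ≡ n % k [MOD 2 ^ L] := by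
    rw [Nat.modEq_iff_dvd]
    simpa using key.neg_right
  exact hmod

lemma conds {n q s : ℕ} (hn : 2 ^ (q + 2) ≤ n) (hs : 1 ≤ s)
    (hlow : 2 ^ (q + 2) < lowdeg (eps (n + s) - eps n)) (K L : ℕ) (hK : 0 < K)
    (hcon : K * 2 ^ (L - 1) ≤ 2 ^ (q + 2) + 1) :
    (n + s) / K % 2 ^ L = n / K % 2 ^ L := by
  apply chain_pow
  intro j hj
  apply parity_of_lowdeg hs hn hlow
  · exact Nat.mul_pos hK (Nat.two_pow_pos j)
  · calc K * 2 ^ j ≤ K * 2 ^ (L - 1) :=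
        Nat.mul_le_mul_left _ (Nat.pow_le_pow_right (by norm_num) (by omega))
    _ ≤ 2 ^ (q + 2) + 1 := hcon

lemma dvd_two_pow {n q s : ℕ} (hn : 2 ^ (q + 2) ≤ n) (hs : 1 ≤ s)
    (hlow : 2 ^ (q + 2) < lowdeg (eps (n + s) - eps n)) : 2 ^ (q + 3) ∣ s := by
  have hch := conds hn hs hlow 1 (q + 3) (by norm_num)
    (by simp only [one_mul]
        exact le_trans (Nat.pow_le_pow_right (by norm_num) (by omega)) (Nat.le_succ _))
  rw [Nat.div_one, Nat.div_one] at hch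
  exact dvd_of_mod_pow_eq hch

lemma master {n q s : ℕ} (hn : 2 ^ (q + 2) ≤ n) (hs : 1 ≤ s)
    (hlow : 2 ^ (q + 2) < lowdeg (eps (n + s) - eps n))
    (K L : ℕ) (hK : 0 < K) (hL : L ≤ q + 3)
    (hcon : K * 2 ^ (L - 1) ≤ 2 ^ (q + 2) + 1) :
    s % K ∈ (Finset.range K).filter
      (fun t => ((n % K + t) % K) % 2 ^ L = (n % K) % 2 ^ L) := by
  have hch := conds hn hs hlow K L hK hcon
  have hdvd : 2 ^ L ∣ s := dvd_trans (pow_dvd_pow 2 hL) (dvd_two_pow hn hs hlow)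
  have hr := rigid_mod hK hdvd hch
  rw [Finset.mem_filter, Finset.mem_range]
  refine ⟨Nat.mod_lt _ hK, ?_⟩
  rw [← Nat.add_mod]
  exact hr

lemma cardA_le_one (K L r : ℕ) (hK : 0 < K) (hr : r < K) (hKL : K ≤ 2 ^ L) :
    ((Finset.range K).filter
      (fun t => ((r + t) % K) % 2 ^ L = r % 2 ^ L)).card ≤ 1 := by
  have hsub : ((Finset.range K).filter
      (fun t => ((r + t) % K) % 2 ^ L = r % 2 ^ L)) ⊆ {0} := by
    intro t ht
    rw [Finset.mem_filter, Finset.mem_range] at ht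
    obtain ⟨htK, he⟩ := ht
    have h1 : (r + t) % K < 2 ^ L := lt_of_lt_of_le (Nat.mod_lt _ hK) hKL
    have h2 : r % 2 ^ L = r := Nat.mod_eq_of_lt (lt_of_lt_of_le hr hKL)
    rw [Nat.mod_eq_of_lt h1, h2] at he
    have hmod : r + t ≡ r + 0 [MOD K] := by
      simpa [Nat.ModEq, Nat.mod_eq_of_lt hr] using he
    have hdvd := (Nat.modEq_zero_iff_dvd).mp (Nat.ModEq.add_left_cancel' r hmod)
    have ht0 : t = 0 := Nat.eq_zero_of_dvd_of_lt hdvd htK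
    simp [ht0]
  calc _ ≤ ({0} : Finset ℕ).card := Finset.card_le_card hsub
  _ = 1 := Finset.card_singleton 0

lemma count4 (P : ℕ → Prop) [DecidablePred P] (m d k3 k5 k7 : ℕ)
    (hd : 0 < d) (h3 : 0 < k3) (h5 : 0 < k5) (h7 : 0 < k7)
    (cd3 : Nat.Coprime d k3) (cd5 : Nat.Coprime d k5) (cd7 : Nat.Coprime d k7)
    (c35 : Nat.Coprime k3 k5) (c37 : Nat.Coprime k3 k7) (c57 : Nat.Coprime k5 k7)
    (A3 A5 A7 : Finset ℕ)
    (hP : ∀ s, 1 ≤ s → P s → d ∣ s ∧ s % k3 ∈ A3 ∧ s % k5 ∈ A5 ∧ s % k7 ∈ A7) :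
    ((Finset.Icc 1 m).filter P).card
      ≤ A3.card * (A5.card * A7.card) * (m / (d * (k3 * (k5 * k7))) + 1) := by
  set D := d * (k3 * (k5 * k7)) with hD
  have hD0 : 0 < D := by positivity
  have hcard : A3.card * (A5.card * A7.card) * (m / D + 1)
      = ((A3 ×ˢ (A5 ×ˢ A7)) ×ˢ Finset.range (m / D + 1)).card := by
    simp [Finset.card_product, mul_assoc]
  rw [hcard]
  apply Finset.card_le_card_of_injOn (fun s => ((s % k3, (s % k5, s % k7)), s / D))
  · intro s hs
    simp only [Finset.mem_coe, Finset.mem_filter, Finset.mem_Icc] at hs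
    obtain ⟨⟨hs1, hsm⟩, hPs⟩ := hs
    obtain ⟨_, h3m, h5m, h7m⟩ := hP s hs1 hPs
    simp only [Finset.mem_coe, Finset.mem_product, Finset.mem_range]
    exact ⟨⟨h3m, h5m, h7m⟩, lt_of_le_of_lt (Nat.div_le_div_right hsm) (Nat.lt_succ_self _)⟩
  · intro s hs s' hs' heq
    simp only [Finset.coe_filter, Set.mem_setOf_eq, Finset.mem_Icc] at hs hs'
    obtain ⟨⟨hs1, _⟩, hPs⟩ := hs
    obtain ⟨⟨hs1', _⟩, hPs'⟩ := hs'
    obtain ⟨hdd, _, _, _⟩ := hP s hs1 hPs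
    obtain ⟨hdd', _, _, _⟩ := hP s' hs1' hPs'
    simp only [Prod.mk.injEq] at heq
    obtain ⟨⟨e3, e5, e7⟩, eqq⟩ := heq
    have m3 : s ≡ s' [MOD k3] := e3
    have m5 : s ≡ s' [MOD k5] := e5
    have m7 : s ≡ s' [MOD k7] := e7
    have md : s ≡ s' [MOD d] :=
      ((Nat.modEq_zero_iff_dvd).mpr hdd).trans ((Nat.modEq_zero_iff_dvd).mpr hdd').symm
    have hmod : s ≡ s' [MOD D] := by
      rw [hD]
      refine (Nat.modEq_and_modEq_iff_modEq_mul (cd3.mul_right (cd5.mul_right cd7))).mp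
        ⟨md, ?_⟩
      refine (Nat.modEq_and_modEq_iff_modEq_mul (c35.mul_right c37)).mp ⟨m3, ?_⟩
      exact (Nat.modEq_and_modEq_iff_modEq_mul c57).mp ⟨m5, m7⟩
    have hmm : s % D = s' % D := hmod
    calc s = D * (s / D) + s % D := (Nat.div_add_mod _ _).symm
    _ = D * (s' / D) + s' % D := by rw [eqq, hmm]
    _ = s' := Nat.div_add_mod _ _

lemma limsup_count_bound (u : ℕ → ℕ) (C T : ℕ) (hT : 0 < T) (hC : 0 < C)
    (h : ∀ m, u m ≤ C * (m / T + 1)) :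
    limsup (fun m : ℕ => (u m : ℝ) / m) atTop ≤ (C : ℝ) / T := by
  have hT' : (0:ℝ) < T := by exact_mod_cast hT
  have key : ∀ᶠ m : ℕ in atTop, (u m : ℝ) / m ≤ (C : ℝ) / T + (C : ℝ) / m := by
    filter_upwards [eventually_ge_atTop 1] with m hm
    have hm0 : (0:ℝ) < m := by exact_mod_cast hm
    have h1 : (u m : ℝ) ≤ (C:ℝ) * ((m : ℝ) / T + 1) := by
      calc (u m : ℝ) ≤ ((C * (m / T + 1) : ℕ) : ℝ) := by exact_mod_cast h m
      _ = (C:ℝ) * (((m / T : ℕ) : ℝ) + 1) := by push_cast; ring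
      _ ≤ (C:ℝ) * ((m : ℝ) / T + 1) := by
          have := Nat.cast_div_le (α := ℝ) (m := m) (n := T)
          gcongr
    have h2 : (u m : ℝ) / m ≤ ((C:ℝ) * ((m : ℝ) / T + 1)) / m := by gcongr
    calc (u m : ℝ) / m ≤ ((C:ℝ) * ((m : ℝ) / T + 1)) / m := h2
    _ = (C : ℝ) / T + (C : ℝ) / m := by field_simp
  have hg : Tendsto (fun m : ℕ => (C:ℝ)/T + (C:ℝ)/m) atTop (nhds ((C:ℝ)/T + 0)) :=
    tendsto_const_nhds.add (tendsto_const_div_atTop_nhds_zero_nat (C:ℝ))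
  have hco : IsCoboundedUnder (· ≤ ·) atTop (fun m : ℕ => (u m : ℝ) / m) := by
    apply isCoboundedUnder_le_of_le (x := 0) atTop
    intro m
    positivity
  calc limsup (fun m : ℕ => (u m : ℝ) / m) atTop
      ≤ limsup (fun m : ℕ => (C:ℝ)/T + (C:ℝ)/m) atTop :=
        limsup_le_limsup key hco hg.isBoundedUnder_le
  _ = (C:ℝ)/T + 0 := hg.limsup_eq
  _ = (C:ℝ)/T := add_zero _

lemma numeric_ge8 (q : ℕ) (hq : 8 ≤ q) : 4410000 * 49 ^ q ≤ 2 ^ (7 * q + 12) := by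
  induction q with
  | zero => omega
  | succ p ih =>
    rcases Nat.lt_or_ge p 8 with hp | hp
    · have hp8 : p = 7 := by omega
      subst hp8
      norm_num
    · have h := ih hp
      have e : 4410000 * 49 ^ (p + 1) = 49 * (4410000 * 49 ^ p) := by ring
      rw [e]
      calc 49 * (4410000 * 49 ^ p) ≤ 49 * 2 ^ (7 * p + 12) :=
            Nat.mul_le_mul_left _ h
      _ ≤ 128 * 2 ^ (7 * p + 12) := Nat.mul_le_mul_right _ (by norm_num)
      _ = 2 ^ (7 * (p + 1) + 12) := by
            rw [show 7 * (p + 1) + 12 = (7 * p + 12) + 7 by ring, pow_add]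
            ring

lemma numeric3 (q : ℕ) (hq : 3 ≤ q) :
    20 * 7 ^ q ≤ 2 ^ q * (2 ^ (q + 3) * (3 ^ (Nat.log 3 (2 ^ ((q + 3) / 2)))
      * (5 ^ (Nat.log 5 (2 ^ ((q + 3) / 2))) * 7 ^ (Nat.log 7 (2 ^ ((q + 3) / 2)))))) := by
  rcases Nat.lt_or_ge q 8 with hq8 | hq8
  · have l38 : Nat.log 3 8 = 1 := Nat.log_eq_of_pow_le_of_lt_pow (by norm_num) (by norm_num)
    have l58 : Nat.log 5 8 = 1 := Nat.log_eq_of_pow_le_of_lt_pow (by norm_num) (by norm_num)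
    have l78 : Nat.log 7 8 = 1 := Nat.log_eq_of_pow_le_of_lt_pow (by norm_num) (by norm_num)
    have l316 : Nat.log 3 16 = 2 := Nat.log_eq_of_pow_le_of_lt_pow (by norm_num) (by norm_num)
    have l516 : Nat.log 5 16 = 1 := Nat.log_eq_of_pow_le_of_lt_pow (by norm_num) (by norm_num)
    have l716 : Nat.log 7 16 = 1 := Nat.log_eq_of_pow_le_of_lt_pow (by norm_num) (by norm_num)
    have l332 : Nat.log 3 32 = 3 := Nat.log_eq_of_pow_le_of_lt_pow (by norm_num) (by norm_num)
    have l532 : Nat.log 5 32 = 2 := Nat.log_eq_of_pow_le_of_lt_pow (by norm_num) (by norm_num)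
    have l732 : Nat.log 7 32 = 1 := Nat.log_eq_of_pow_le_of_lt_pow (by norm_num) (by norm_num)
    interval_cases q <;>
      norm_num [l38, l58, l78, l316, l516, l716, l332, l532, l732]
  · set m := (q + 3) / 2 with hm
    set a := Nat.log 3 (2 ^ m) with ha
    set b := Nat.log 5 (2 ^ m) with hb
    set c := Nat.log 7 (2 ^ m) with hc
    have f3 : 2 ^ m ≤ 3 ^ (a + 1) := le_of_lt (Nat.lt_pow_succ_log_self (by norm_num) _)
    have f5 : 2 ^ m ≤ 5 ^ (b + 1) := le_of_lt (Nat.lt_pow_succ_log_self (by norm_num) _)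
    have f7 : 2 ^ m ≤ 7 ^ (c + 1) := le_of_lt (Nat.lt_pow_succ_log_self (by norm_num) _)
    have h2m : q + 2 ≤ 2 * m := by omega
    have hprod : 2 ^ (3 * m) ≤ 105 * (3 ^ a * (5 ^ b * 7 ^ c)) := by
      calc 2 ^ (3 * m) = 2 ^ m * (2 ^ m * 2 ^ m) := by
            rw [show 3 * m = m + (m + m) by ring, pow_add, pow_add]
      _ ≤ 3 ^ (a + 1) * (5 ^ (b + 1) * 7 ^ (c + 1)) :=
            Nat.mul_le_mul f3 (Nat.mul_le_mul f5 f7)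
      _ = 105 * (3 ^ a * (5 ^ b * 7 ^ c)) := by ring
    have hmain : 2100 * 7 ^ q ≤ 2 ^ (2 * q + 3) * 2 ^ (3 * m) := by
      rw [← pow_add]
      have hsq : (2100 * 7 ^ q) ^ 2 ≤ (2 ^ (2 * q + 3 + 3 * m)) ^ 2 := by
        have l1 : (2100 * 7 ^ q) ^ 2 = 4410000 * 49 ^ q := by
          rw [mul_pow, ← pow_mul, mul_comm q 2, pow_mul]
          norm_num
        have l2 : (2 ^ (2 * q + 3 + 3 * m)) ^ 2 = 2 ^ (4 * q + 6 + 6 * m) := by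
          rw [← pow_mul]
          congr 1
          ring
        rw [l1, l2]
        calc 4410000 * 49 ^ q ≤ 2 ^ (7 * q + 12) := numeric_ge8 q hq8
        _ ≤ 2 ^ (4 * q + 6 + 6 * m) := Nat.pow_le_pow_right (by norm_num) (by omega)
      exact (Nat.pow_le_pow_iff_left (two_ne_zero)).mp hsq
    have hfin : 105 * (20 * 7 ^ q)
        ≤ 105 * (2 ^ q * (2 ^ (q + 3) * (3 ^ a * (5 ^ b * 7 ^ c)))) := by
      calc 105 * (20 * 7 ^ q) = 2100 * 7 ^ q := by ring
      _ ≤ 2 ^ (2 * q + 3) * 2 ^ (3 * m) := hmain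
      _ ≤ 2 ^ (2 * q + 3) * (105 * (3 ^ a * (5 ^ b * 7 ^ c))) :=
          Nat.mul_le_mul_left _ hprod
      _ = 105 * (2 ^ q * (2 ^ (q + 3) * (3 ^ a * (5 ^ b * 7 ^ c)))) := by
          rw [show 2 * q + 3 = q + (q + 3) by ring, pow_add]
          ring
    exact Nat.le_of_mul_le_mul_left hfin (by norm_num)

theorem hcount_limsup_pow_bound (n : ℕ) (hn : 1 ≤ n) (q : ℕ) (hq : 1 ≤ q) :
    limsup (fun m : ℕ => (hcount n m (2 ^ (q + 2)) : ℝ) / m) atTop ≤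
      (2 / 7 : ℝ) ^ q * (1 / 20) := by
  by_cases hni : n < 2 ^ (q + 2)
  · -- degenerate case: hcount is identically 0
    have hzero : ∀ m, hcount n m (2 ^ (q + 2)) = 0 := by
      intro m
      unfold hcount
      rw [Finset.card_eq_zero, Finset.filter_eq_empty_iff]
      intro s hsmem
      rw [Finset.mem_Icc] at hsmem
      exact coeff_top_ne n s _ hsmem.1 hni
    have hfun : (fun m : ℕ => (hcount n m (2 ^ (q + 2)) : ℝ) / m) = fun _ => (0:ℝ) := by
      funext m
      rw [hzero]
      simp
    rw [hfun, limsup_const]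
    positivity
  · push_neg at hni
    rcases Nat.lt_or_ge q 3 with hq3 | hq3
    · interval_cases q
      · -- q = 1
        apply le_trans (limsup_count_bound _ 12 (2 ^ (1 + 3) * (3 * (5 * 7)))
          (by norm_num) (by norm_num) ?_)
        · norm_num
        intro m
        unfold hcount
        have c5 : ∀ r, r < 5 → ((Finset.range 5).filter
            (fun t => ((r + t) % 5) % 2 ^ 1 = r % 2 ^ 1)).card ≤ 3 := by decide
        have c7 : ∀ r, r < 7 → ((Finset.range 7).filter
            (fun t => ((r + t) % 7) % 2 ^ 1 = r % 2 ^ 1)).card ≤ 4 := by decide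
        have c3 := cardA_le_one 3 2 (n % 3) (by norm_num) (Nat.mod_lt _ (by norm_num))
          (by norm_num)
        calc _ ≤ _ := count4 _ m (2 ^ (1 + 3)) 3 5 7 (by norm_num) (by norm_num)
              (by norm_num) (by norm_num) (by decide) (by decide) (by decide)
              (by decide) (by decide) (by decide) _ _ _
              (fun s hs hlow => ⟨dvd_two_pow hni hs hlow,
                master hni hs hlow 3 2 (by norm_num) (by norm_num) (by norm_num),
                master hni hs hlow 5 1 (by norm_num) (by norm_num) (by norm_num),
                master hni hs hlow 7 1 (by norm_num) (by norm_num) (by norm_num)⟩)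
        _ ≤ 12 * (m / (2 ^ (1 + 3) * (3 * (5 * 7))) + 1) := by
              apply Nat.mul_le_mul_right
              calc _ ≤ 1 * (3 * 4) := by
                    apply Nat.mul_le_mul c3
                    exact Nat.mul_le_mul (c5 (n % 5) (Nat.mod_lt _ (by norm_num)))
                      (c7 (n % 7) (Nat.mod_lt _ (by norm_num)))
              _ = 12 := by norm_num
      · -- q = 2
        apply le_trans (limsup_count_bound _ 4 (2 ^ (2 + 3) * (3 * (5 * 7)))
          (by norm_num) (by norm_num) ?_)
        · norm_num
        intro m
        unfold hcount
        have c5 : ∀ r, r < 5 → ((Finset.range 5).filter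
            (fun t => ((r + t) % 5) % 2 ^ 2 = r % 2 ^ 2)).card ≤ 2 := by decide
        have c7 : ∀ r, r < 7 → ((Finset.range 7).filter
            (fun t => ((r + t) % 7) % 2 ^ 2 = r % 2 ^ 2)).card ≤ 2 := by decide
        have c3 := cardA_le_one 3 3 (n % 3) (by norm_num) (Nat.mod_lt _ (by norm_num))
          (by norm_num)
        calc _ ≤ _ := count4 _ m (2 ^ (2 + 3)) 3 5 7 (by norm_num) (by norm_num)
              (by norm_num) (by norm_num) (by decide) (by decide) (by decide)
              (by decide) (by decide) (by decide) _ _ _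
              (fun s hs hlow => ⟨dvd_two_pow hni hs hlow,
                master hni hs hlow 3 3 (by norm_num) (by norm_num) (by norm_num),
                master hni hs hlow 5 2 (by norm_num) (by norm_num) (by norm_num),
                master hni hs hlow 7 2 (by norm_num) (by norm_num) (by norm_num)⟩)
        _ ≤ 4 * (m / (2 ^ (2 + 3) * (3 * (5 * 7))) + 1) := by
              apply Nat.mul_le_mul_right
              calc _ ≤ 1 * (2 * 2) := by
                    apply Nat.mul_le_mul c3
                    exact Nat.mul_le_mul (c5 (n % 5) (Nat.mod_lt _ (by norm_num)))
                      (c7 (n % 7) (Nat.mod_lt _ (by norm_num)))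
              _ = 4 := by norm_num
    · -- general case q ≥ 3
      set m' := (q + 3) / 2 with hm'
      set a := Nat.log 3 (2 ^ m') with haa
      set b := Nat.log 5 (2 ^ m') with hbb
      set c := Nat.log 7 (2 ^ m') with hcc
      have g3 : 3 ^ a ≤ 2 ^ m' := Nat.pow_log_le_self 3 (by positivity)
      have g5 : 5 ^ b ≤ 2 ^ m' := Nat.pow_log_le_self 5 (by positivity)
      have g7 : 7 ^ c ≤ 2 ^ m' := Nat.pow_log_le_self 7 (by positivity)
      have hm1 : 3 ≤ m' := by omega
      have hm2 : m' ≤ q + 2 := by omega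
      have hm3 : m' ≤ q + 3 - m' := by omega
      set L := q + 3 - m' with hL
      have hLle : L ≤ q + 3 := by omega
      have h2L : 2 ^ m' ≤ 2 ^ L := Nat.pow_le_pow_right (by norm_num) hm3
      have hcon : ∀ k : ℕ, k ≤ 2 ^ m' → k * 2 ^ (L - 1) ≤ 2 ^ (q + 2) + 1 := by
        intro k hk
        calc k * 2 ^ (L - 1) ≤ 2 ^ m' * 2 ^ (q + 2 - m') := by
              apply Nat.mul_le_mul hk
              apply Nat.pow_le_pow_right (by norm_num)
              omega
        _ = 2 ^ (q + 2) := by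
              rw [← pow_add]
              congr 1
              omega
        _ ≤ 2 ^ (q + 2) + 1 := Nat.le_succ _
      set T := 2 ^ (q + 3) * (3 ^ a * (5 ^ b * 7 ^ c)) with hT
      have hT0 : 0 < T := by positivity
      have hp3 : (0:ℕ) < 3 ^ a := by positivity
      have hp5 : (0:ℕ) < 5 ^ b := by positivity
      have hp7 : (0:ℕ) < 7 ^ c := by positivity
      apply le_trans (limsup_count_bound _ 1 T hT0 (by norm_num) ?_)
      · -- final numeric inequality
        have hnum := numeric3 q hq3
        have h7q : (0:ℝ) < (7:ℝ) ^ q := by positivity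
        have hTr : (0:ℝ) < (T:ℝ) := by exact_mod_cast hT0
        rw [show ((2:ℝ)/7) ^ q * (1/20) = 2 ^ q / (20 * 7 ^ q) by
              rw [div_pow]; field_simp]
        rw [div_le_div_iff₀ hTr (by positivity)]
        have hc : ((20 * 7 ^ q : ℕ) : ℝ) ≤ ((2 ^ q * T : ℕ) : ℝ) := by
          exact_mod_cast hnum
        push_cast at hc ⊢
        linarith
      intro m
      unfold hcount
      have c3 := cardA_le_one (3 ^ a) L (n % 3 ^ a) hp3 (Nat.mod_lt _ hp3)
        (le_trans g3 h2L)
      have c5 := cardA_le_one (5 ^ b) L (n % 5 ^ b) hp5 (Nat.mod_lt _ hp5)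
        (le_trans g5 h2L)
      have c7 := cardA_le_one (7 ^ c) L (n % 7 ^ c) hp7 (Nat.mod_lt _ hp7)
        (le_trans g7 h2L)
      calc _ ≤ _ := count4 _ m (2 ^ (q + 3)) (3 ^ a) (5 ^ b) (7 ^ c)
            (by positivity) hp3 hp5 hp7
            (Nat.Coprime.pow _ _ (by decide)) (Nat.Coprime.pow _ _ (by decide))
            (Nat.Coprime.pow _ _ (by decide)) (Nat.Coprime.pow _ _ (by decide))
            (Nat.Coprime.pow _ _ (by decide)) (Nat.Coprime.pow _ _ (by decide)) _ _ _
            (fun s hs hlow => ⟨dvd_two_pow hni hs hlow,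
              master hni hs hlow (3 ^ a) L hp3 hLle (hcon _ g3),
              master hni hs hlow (5 ^ b) L hp5 hLle (hcon _ g5),
              master hni hs hlow (7 ^ c) L hp7 hLle (hcon _ g7)⟩)
      _ ≤ 1 * (m / T + 1) := by
            rw [hT]
            apply Nat.mul_le_mul_right
            calc _ ≤ 1 * (1 * 1) := by
                  apply Nat.mul_le_mul c3
                  exact Nat.mul_le_mul c5 c7
            _ = 1 := by norm_num
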